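/- arXiv:2205.02473 — 6 statements merged into one kernel-verified Lean document; each statement's English description precedes it below -/
import Mathlib

section
/- In the two-op pipeline model, if the synchronization time A of the first tensor satisfies A ≤ a + b − c (where c is the fused op's execution time), then the completion time with operator fusion, T_f = max(Q, P + c) + A + B, is at most the completion time without fusion, T_0 = max(max(Q, P + a) + A, P + a + b) + B. -/
/-- Two-op pipeline model: if the first tensor's sync time `A` satisfies
`A ≤ a + b - c`, op fusion is no worse:
`T_f = max(Q, P + c) + A + B ≤ T_0 = max(max(Q, P + a) + A, P + a + b) + B`. -/
theorem op_fusion_helps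
    (P Q a b A B c : ℝ)
    (hP : 0 ≤ P) (hQ : 0 ≤ Q) (ha : 0 ≤ a) (hb : 0 ≤ b)
    (hA : 0 ≤ A) (hB : 0 ≤ B)
    (hc₁ : max a b ≤ c) (hc₂ : c ≤ a + b)
    (hcond : A ≤ a + b - c) :
    max Q (P + c) + A + B ≤ max (max Q (P + a) + A) (P + a + b) + B := by
  have h1 : Q + A ≤ max (max Q (P + a) + A) (P + a + b) :=
    le_max_of_le_left (by have := le_max_left Q (P + a); linarith)
  have h2 : P + c + A ≤ max (max Q (P + a) + A) (P + a + b) :=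
    le_max_of_le_right (by linarith)
  have : max Q (P + c) + A ≤ max (max Q (P + a) + A) (P + a + b) := by
    rcases max_cases Q (P + c) with ⟨h, _⟩ | ⟨h, _⟩ <;> rw [h] <;> assumption
  linarith
end

section
/- In the two-op pipeline model, if A ≥ a + b − c, then operator fusion does not help: T_f = max(P + c, max(Q, P + c) + A + B) ≥ T_0 = max(P + a + b, max(max(Q, P + a) + A, P + a + b) + B). -/
/-- Two-op pipeline model: if `A ≥ a + b - c`, op fusion does not help:
`T_f = max(P + c, max(Q, P + c) + A + B) ≥
 T_0 = max(P + a + b, max(max(Q, P + a) + A, P + a + b) + B)`. -/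
theorem op_fusion_does_not_help
    (P Q a b A B c : ℝ)
    (hP : 0 ≤ P) (hQ : 0 ≤ Q) (ha : 0 ≤ a) (hb : 0 ≤ b)
    (hA : 0 ≤ A) (hB : 0 ≤ B)
    (hc₁ : max a b ≤ c) (hc₂ : c ≤ a + b)
    (hcond : a + b - c ≤ A) :
    max (P + a + b) (max (max Q (P + a) + A) (P + a + b) + B) ≤
      max (P + c) (max Q (P + c) + A + B) := by
  have haC : a ≤ c := le_trans (le_max_left a b) hc₁
  have hQ' : Q ≤ max Q (P + c) := le_max_left _ _
  have hPc : P + c ≤ max Q (P + c) := le_max_right _ _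
  apply max_le
  · exact le_trans (by linarith) (le_max_right _ _)
  · apply le_trans _ (le_max_right _ _)
    have h1 : max Q (P + a) ≤ max Q (P + c) := max_le_max le_rfl (by linarith)
    have h2 : max (max Q (P + a) + A) (P + a + b) ≤ max Q (P + c) + A :=
      max_le (by linarith) (by linarith)
    linarith
end

section
/- In the tensor-fusion model, if the first tensor's communication finish time q1 = max(Q, p1) + A satisfies q1 ≥ p2 + C − B, then fusing the two tensors yields completion time T_f = max(Q, p2) + C at most the unfused completion time T_0 = max(max(Q, p1) + A, p2) + B. -/
/-- Tensor-fusion model: if `q1 = max(Q, p1) + A ≥ p2 + C - B`, fusing the two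
tensors is no worse: `T_f = max(Q, p2) + C ≤ T_0 = max(max(Q, p1) + A, p2) + B`. -/
theorem tensor_fusion_helps
    (p1 p2 Q A B C : ℝ)
    (hp1 : 0 ≤ p1) (hp12 : p1 ≤ p2) (hQ : 0 ≤ Q)
    (hA : 0 ≤ A) (hB : 0 ≤ B)
    (hC₁ : max A B ≤ C) (hC₂ : C ≤ A + B)
    (hcond : p2 + C - B ≤ max Q p1 + A) :
    max Q p2 + C ≤ max (max Q p1 + A) p2 + B := by
  have h1 : max Q p1 + A ≤ max (max Q p1 + A) p2 := le_max_left _ _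
  have hQle : Q ≤ max Q p1 := le_max_left _ _
  rcases max_cases Q p2 with ⟨h, _⟩ | ⟨h, _⟩ <;> rw [h] <;> linarith
end

section
/- In the tensor-fusion model, if q1 = max(Q, p1) + A ≤ p2 + C − B, then tensor fusion does not help: T_f = max(Q, p2) + C ≥ T_0 = max(max(Q, p1) + A, p2) + B. -/
/-- Tensor-fusion model: if `q1 = max(Q, p1) + A ≤ p2 + C - B`, tensor fusion
does not help: `T_f = max(Q, p2) + C ≥ T_0 = max(max(Q, p1) + A, p2) + B`. -/
theorem tensor_fusion_does_not_help
    (p1 p2 Q A B C : ℝ)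
    (hp1 : 0 ≤ p1) (hp12 : p1 ≤ p2) (hQ : 0 ≤ Q)
    (hA : 0 ≤ A) (hB : 0 ≤ B)
    (hC₁ : max A B ≤ C) (hC₂ : C ≤ A + B)
    (hcond : max Q p1 + A ≤ p2 + C - B) :
    max (max Q p1 + A) p2 + B ≤ max Q p2 + C := by
  have h2 : p2 + B ≤ max Q p2 + C := by
    have := le_max_right Q p2
    have := le_max_right A B
    have := le_trans this hC₁
    linarith
  have h3 : max Q p1 + A + B ≤ max Q p2 + C := by
    have := le_max_right Q p2
    linarith
  have h4 := max_le (show max Q p1 + A ≤ max Q p2 + C - B by linarith)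
    (show p2 ≤ max Q p2 + C - B by linarith)
  linarith
end

section
/- Among the four strategies {no fusion, op fusion only, tensor fusion only, combined op-and-tensor fusion}, the minimum completion time is always attained by either the no-fusion strategy or the combined strategy; that is, min(T_0, T_o, T_t, T_ot) = min(T_0, T_ot). -/
/-! Completion time is monotone in both the op duration and the sync duration, and fusing never
lengthens either (`c ≤ a + b`, `C ≤ A + B`), so `T_ot` lies below both `T_o` and `T_t`. -/

section CompletionTime

variable {α : Type*} [AddCommMonoid α] [LinearOrder α] [IsOrderedAddMonoid α]

/-- `T_o`, `T_t` and `T_ot` all have this shape: an op of duration `d` runs from `P`, then a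
synchronisation of duration `s` starts once the channel is free as well (from `Q`). -/
def syncCompletionTime (P Q d s : α) : α :=
  max (P + d) (max Q (P + d) + s)

theorem syncCompletionTime_mono {P Q d d' s s' : α} (hd : d ≤ d') (hs : s ≤ s') :
    syncCompletionTime P Q d s ≤ syncCompletionTime P Q d' s' := by
  unfold syncCompletionTime
  gcongr

end CompletionTime

theorem best_strategy_is_none_or_combined_general
    (P Q a b A B c C : ℝ)
    (hc₂ : c ≤ a + b)
    (hC₂ : C ≤ A + B) :
    min (max (P + a + b) (max (max Q (P + a) + A) (P + a + b) + B))
      (min (max (P + c) (max Q (P + c) + A + B))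
        (min (max (P + a + b) (max Q (P + a + b) + C))
          (max (P + c) (max Q (P + c) + C)))) =
    min (max (P + a + b) (max (max Q (P + a) + A) (P + a + b) + B))
      (max (P + c) (max Q (P + c) + C)) := by
  have combined_le_op : max (P + c) (max Q (P + c) + C) ≤
      max (P + c) (max Q (P + c) + A + B) := by
    simpa only [syncCompletionTime, add_assoc] using
      syncCompletionTime_mono (P := P) (Q := Q) le_rfl hC₂
  have combined_le_tensor : max (P + c) (max Q (P + c) + C) ≤
      max (P + a + b) (max Q (P + a + b) + C) := by
    simpa only [syncCompletionTime, add_assoc] using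
      syncCompletionTime_mono (P := P) (Q := Q) hc₂ le_rfl
  rw [min_eq_right combined_le_tensor, min_eq_right combined_le_op]

/-- Among {no fusion, op fusion only, tensor fusion only, combined fusion},
the best completion time is attained by no-fusion or the combined strategy:
`min(T_0, T_o, T_t, T_ot) = min(T_0, T_ot)`. -/
theorem best_strategy_is_none_or_combined
    (P Q a b A B c C : ℝ)
    (hP : 0 ≤ P) (hQ : 0 ≤ Q) (ha : 0 ≤ a) (hb : 0 ≤ b)
    (hA : 0 ≤ A) (hB : 0 ≤ B)
    (hc₁ : max a b ≤ c) (hc₂ : c ≤ a + b)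
    (hC₁ : max A B ≤ C) (hC₂ : C ≤ A + B) :
    min (max (P + a + b) (max (max Q (P + a) + A) (P + a + b) + B))
      (min (max (P + c) (max Q (P + c) + A + B))
        (min (max (P + a + b) (max Q (P + a + b) + C))
          (max (P + c) (max Q (P + c) + C)))) =
    min (max (P + a + b) (max (max Q (P + a) + A) (P + a + b) + B))
      (max (P + c) (max Q (P + c) + C)) :=
  best_strategy_is_none_or_combined_general P Q a b A B c C hc₂ hC₂
end

section
/- Operator fusion can strictly hurt distributed training performance: there exist nonnegative reals P, Q, a, b, A, B and c with max(a, b) ≤ c ≤ a + b such that the fused completion time max(P + c, max(Q, P + c) + A + B) is strictly greater than the unfused completion time max(P + a + b, max(max(Q, P + a) + A, P + a + b) + B). -/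
/-- Operator fusion can strictly hurt distributed training performance. -/
theorem op_fusion_can_hurt :
    ∃ (P Q a b A B c : ℝ),
      0 ≤ P ∧ 0 ≤ Q ∧ 0 ≤ a ∧ 0 ≤ b ∧ 0 ≤ A ∧ 0 ≤ B ∧
      max a b ≤ c ∧ c ≤ a + b ∧
      max (P + a + b) (max (max Q (P + a) + A) (P + a + b) + B) <
        max (P + c) (max Q (P + c) + A + B) := by
  use 0, 0, 1, 1, 1, 0, 2
  norm_num
end
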